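/- arXiv:math/0703837 — 5 statements merged into one kernel-verified Lean document; each statement's English description precedes it below -/
import Mathlib

section
/- (Deterministic core of Theorem 3.2(a), defective case.) If ∫₀^∞ g(s) ds < 1, then there exists κ > 0 such that e^{κt}·M(t) → 0 as t → ∞. -/
/-!
Bounding the integrands of `Gν` by exponentials shows that `f` and `g` decay like `e^{-2γt}`.
Hence `θ(κ) = ∫₀^∞ e^{κu} g(u) du` is finite for `κ ≤ γ`, and by dominated convergence
`θ(κ) → ∫₀^∞ g < 1` as `κ → 0⁺`, so `θ(κ) < 1` for some `κ > 0`. The weighted function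
`z(t) = e^{κt} y(t)` then satisfies `z ≤ A + (e^{κ·} g) ∗ z`, and the supremum `S` of `z` on
`[0, T]` obeys `S ≤ A + θ(κ) S`; thus `y(t) ≤ A / (1 - θ(κ)) · e^{-κt}`. Convolving with
`r² ≤ C² e^{-2γt}` keeps the rate `κ < 2γ`, so `M(t) = O(e^{-κt})` and `e^{κt/2} M(t) → 0`.
-/

open MeasureTheory Filter Set

/-- Integration of `u ↦ ψ (t + u)` over `[-α, 0]` against a finite signed Borel
measure `ν`, realised via its Jordan decomposition:
`Gν α ν ψ t = ∫_{[-α,0]} ψ(t+u) ν(du)`. -/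
noncomputable def Gν (α : ℝ) (ν : MeasureTheory.SignedMeasure ℝ) (ψ : ℝ → ℝ) (t : ℝ) : ℝ :=
  (∫ u in Set.Icc (-α) 0, ψ (t + u) ∂ν.toJordanDecomposition.posPart) -
  (∫ u in Set.Icc (-α) 0, ψ (t + u) ∂ν.toJordanDecomposition.negPart)

open Real Topology

lemma intervalIntegral.integral_mono_of_nonneg {f g : ℝ → ℝ} {a b : ℝ} (hab : a ≤ b)
    (hf : ∀ x ∈ Ioc a b, 0 ≤ f x) (h : ∀ x ∈ Ioc a b, f x ≤ g x)
    (hg : IntervalIntegrable g volume a b) :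
    ∫ x in a..b, f x ≤ ∫ x in a..b, g x := by
  rw [intervalIntegral.integral_of_le hab, intervalIntegral.integral_of_le hab]
  exact setIntegral_mono_of_nonneg hf h hg.1

lemma sq_le_mul_exp_of_abs_le {a c γ t : ℝ} (h : |a| ≤ c * exp (-γ * t)) :
    a ^ 2 ≤ c ^ 2 * exp (-(2 * γ) * t) :=
  calc a ^ 2 = |a| ^ 2 := (sq_abs a).symm
    _ ≤ (c * exp (-γ * t)) ^ 2 := pow_le_pow_left₀ (abs_nonneg a) h 2
    _ = c ^ 2 * exp (-(2 * γ) * t) := by rw [mul_pow, sq (exp _), ← exp_add]; ring_nf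

lemma abs_le_max_mul_exp {ψ : ℝ → ℝ} {a C K γ : ℝ} (hγ : 0 ≤ γ)
    (hneg : ∀ s ∈ Ico a 0, |ψ s| ≤ K) (hpos : ∀ s ≥ 0, |ψ s| ≤ C * exp (-γ * s)) :
    ∀ s ≥ a, |ψ s| ≤ max C K * exp (-γ * s) := by
  intro s hs
  rcases le_or_gt 0 s with h | h
  · exact (hpos s h).trans (mul_le_mul_of_nonneg_right (le_max_left _ _) (exp_pos _).le)
  · have hK := hneg s ⟨hs, h⟩
    have h1 : 1 ≤ exp (-γ * s) := one_le_exp (by nlinarith)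
    have h2 : K ≤ max C K := le_max_right _ _
    nlinarith [abs_nonneg (ψ s)]

section Gν

variable {α : ℝ} {ν : SignedMeasure ℝ} {ψ : ℝ → ℝ}

lemma measurable_Gν (hψ : Measurable ψ) : Measurable (Gν α ν ψ) := by
  have h (μ : Measure ℝ) [SFinite μ] :
      Measurable fun t => ∫ u in Icc (-α) 0, ψ (t + u) ∂μ :=
    ((hψ.comp (measurable_fst.add measurable_snd)).stronglyMeasurable.integral_prod_right'
      (ν := μ.restrict (Icc (-α) 0))).measurable
  exact (h _).sub (h _)

lemma abs_Gν_le {t B : ℝ} (hψ : ∀ u ∈ Icc (-α) 0, |ψ (t + u)| ≤ B) :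
    |Gν α ν ψ t| ≤ B * ν.totalVariation.real (Icc (-α) 0) := by
  have h (μ : Measure ℝ) [IsFiniteMeasure μ] :
      |∫ u in Icc (-α) 0, ψ (t + u) ∂μ| ≤ B * μ.real (Icc (-α) 0) :=
    norm_setIntegral_le_of_norm_le_const (measure_lt_top μ _) hψ (f := fun u => ψ (t + u))
  rw [SignedMeasure.totalVariation, measureReal_add_apply, mul_add]
  exact (abs_sub _ _).trans (add_le_add (h _) (h _))

lemma sq_Gν_le {t K γ : ℝ} (hγ : 0 ≤ γ) (hψ : ∀ s ≥ t - α, |ψ s| ≤ K * exp (-γ * s)) :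
    Gν α ν ψ t ^ 2 ≤
      (K * exp (γ * α) * ν.totalVariation.real (Icc (-α) 0)) ^ 2 * exp (-(2 * γ) * t) := by
  refine sq_le_mul_exp_of_abs_le
    ((abs_Gν_le (B := K * exp (γ * α) * exp (-γ * t)) fun u hu => ?_).trans_eq (by ring))
  have h := hψ (t + u) (by linarith [hu.1])
  have hK : 0 ≤ K := nonneg_of_mul_nonneg_left ((abs_nonneg _).trans h) (exp_pos _)
  calc |ψ (t + u)| ≤ K * exp (-γ * (t + u)) := h
    _ ≤ K * exp (γ * α + -γ * t) := by gcongr; nlinarith [hu.1]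
    _ = K * exp (γ * α) * exp (-γ * t) := by rw [exp_add, mul_assoc]

end Gν

lemma integrableOn_exp_mul_of_le_exp {g : ℝ → ℝ} {A γ : ℝ} (hγ : 0 < γ)
    (hgm : AEStronglyMeasurable g (volume.restrict (Ioi 0))) (hg0 : ∀ u > 0, 0 ≤ g u)
    (hg : ∀ u > 0, g u ≤ A * exp (-(2 * γ) * u)) :
    IntegrableOn (fun u => exp (γ * u) * g u) (Ioi 0) := by
  refine ((exp_neg_integrableOn_Ioi 0 hγ).const_mul A).mono'
    ((continuous_const.mul continuous_id).rexp.aestronglyMeasurable.mul hgm)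
    ((ae_restrict_iff' measurableSet_Ioi).2 (ae_of_all _ fun u (hu : 0 < u) => ?_))
  rw [norm_mul, norm_of_nonneg (exp_pos _).le, norm_of_nonneg (hg0 u hu)]
  calc exp (γ * u) * g u ≤ exp (γ * u) * (A * exp (-(2 * γ) * u)) := by gcongr; exact hg u hu
    _ = A * exp (-γ * u) := by rw [mul_left_comm, ← exp_add]; ring_nf

lemma exists_integral_exp_mul_lt {g : ℝ → ℝ} {γ : ℝ} (hγ : 0 < γ)
    (hg : IntegrableOn (fun u => exp (γ * u) * g u) (Ioi 0)) (hg1 : ∫ u in Ioi 0, g u < 1) :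
    ∃ κ ∈ Ioc 0 γ, IntegrableOn (fun u => exp (κ * u) * g u) (Ioi 0) ∧
      ∫ u in Ioi 0, exp (κ * u) * g u < 1 := by
  have hmeas (κ : ℝ) :
      AEStronglyMeasurable (fun u => exp (κ * u) * g u) (volume.restrict (Ioi 0)) := by
    have h : (fun u => exp (κ * u) * g u) = fun u => exp ((κ - γ) * u) * (exp (γ * u) * g u) := by
      ext u; rw [← mul_assoc, ← exp_add]; ring_nf
    rw [h]
    exact (by fun_prop : Continuous fun u => exp ((κ - γ) * u)).aestronglyMeasurable.mul
      hg.aestronglyMeasurable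
  have hbound {κ : ℝ} (hκ : κ ≤ γ) :
      ∀ᵐ u ∂(volume.restrict (Ioi 0)), ‖exp (κ * u) * g u‖ ≤ ‖exp (γ * u) * g u‖ := by
    refine (ae_restrict_iff' measurableSet_Ioi).2 (ae_of_all _ fun u (hu : 0 < u) => ?_)
    rw [norm_mul, norm_mul, norm_of_nonneg (exp_pos _).le, norm_of_nonneg (exp_pos _).le]
    gcongr
  have hlim : Tendsto (fun κ => ∫ u in Ioi 0, exp (κ * u) * g u) (𝓝[>] 0)
      (𝓝 (∫ u in Ioi 0, g u)) := by
    refine tendsto_integral_filter_of_dominated_convergence _ (Eventually.of_forall hmeas) ?_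
      hg.norm (ae_of_all _ fun u => ?_)
    · filter_upwards [Ioc_mem_nhdsGT hγ] with κ hκ using hbound hκ.2
    · have h : Continuous fun κ => exp (κ * u) * g u := by fun_prop
      simpa using (h.tendsto 0).mono_left nhdsWithin_le_nhds
  obtain ⟨κ, hκ1, hκ⟩ := ((hlim.eventually (gt_mem_nhds hg1)).and (Ioc_mem_nhdsGT hγ)).exists
  exact ⟨κ, hκ, hg.norm.mono' (hmeas κ) (hbound hκ.2), hκ1⟩

lemma le_div_one_sub_of_le_add_integral {z k : ℝ → ℝ} {A : ℝ}
    (hk0 : ∀ u ≥ 0, 0 ≤ k u) (hk : IntegrableOn k (Ioi 0)) (hk1 : ∫ u in Ioi 0, k u < 1)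
    (hz0 : ∀ t ≥ 0, 0 ≤ z t) (hzbdd : ∀ T, ∃ K, ∀ t ∈ Icc 0 T, z t ≤ K)
    (hz : ∀ t ≥ 0, z t ≤ A + ∫ s in 0..t, k (t - s) * z s) :
    ∀ t ≥ 0, z t ≤ A / (1 - ∫ u in Ioi 0, k u) := by
  set θ := ∫ u in Ioi 0, k u
  intro T hT
  obtain ⟨K, hK⟩ := hzbdd T
  set S := sSup (z '' Icc 0 T)
  have hle : ∀ t ∈ Icc 0 T, z t ≤ S :=
    fun t ht => le_csSup ⟨K, forall_mem_image.2 hK⟩ (mem_image_of_mem z ht)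
  have hS0 : 0 ≤ S := (hz0 0 le_rfl).trans (hle 0 ⟨le_rfl, hT⟩)
  have hstep : ∀ t ∈ Icc 0 T, z t ≤ A + θ * S := by
    intro t ht
    have hkt : IntervalIntegrable k volume 0 t :=
      (intervalIntegrable_iff_integrableOn_Ioc_of_le ht.1).2 (hk.mono_set Ioc_subset_Ioi_self)
    calc z t ≤ A + ∫ s in 0..t, k (t - s) * z s := hz t ht.1
      _ ≤ A + ∫ s in 0..t, k (t - s) * S := by
        gcongr
        refine intervalIntegral.integral_mono_of_nonneg ht.1
          (fun s hs => mul_nonneg (hk0 _ (by linarith [hs.2])) (hz0 s hs.1.le))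
          (fun s hs => mul_le_mul_of_nonneg_left (hle s ⟨hs.1.le, hs.2.trans ht.2⟩)
            (hk0 _ (by linarith [hs.2]))) ?_
        simpa using (hkt.comp_sub_left t).symm.mul_const S
      _ = A + (∫ u in 0..t, k u) * S := by
        rw [intervalIntegral.integral_mul_const, intervalIntegral.integral_comp_sub_left]
        simp
      _ ≤ A + θ * S := by
        gcongr
        rw [intervalIntegral.integral_of_le ht.1]
        exact setIntegral_mono_set hk
          ((ae_restrict_iff' measurableSet_Ioi).2 (ae_of_all _ fun u hu => hk0 u (le_of_lt hu)))
          Ioc_subset_Ioi_self.eventuallyLE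
  have hS : S ≤ A + θ * S := csSup_le ⟨z 0, mem_image_of_mem z ⟨le_rfl, hT⟩⟩
    (forall_mem_image.2 hstep)
  calc z T ≤ S := hle T ⟨hT, le_rfl⟩
    _ ≤ A / (1 - θ) := by rw [le_div_iff₀ (by linarith)]; linarith

lemma exp_mul_le_add_integral {f g y : ℝ → ℝ} {A κ t : ℝ} (hf : f t ≤ A * exp (-κ * t))
    (hy : y t ≤ f t + ∫ s in 0..t, g (t - s) * y s) :
    exp (κ * t) * y t ≤ A + ∫ s in 0..t, exp (κ * (t - s)) * g (t - s) * (exp (κ * s) * y s) := by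
  have hf' : exp (κ * t) * f t ≤ A := by
    calc exp (κ * t) * f t ≤ exp (κ * t) * (A * exp (-κ * t)) := by gcongr
      _ = A := by rw [mul_left_comm, ← exp_add]; simp
  have hint : exp (κ * t) * ∫ s in 0..t, g (t - s) * y s =
      ∫ s in 0..t, exp (κ * (t - s)) * g (t - s) * (exp (κ * s) * y s) := by
    rw [← intervalIntegral.integral_const_mul]
    congr 1 with s
    rw [show exp (κ * t) = exp (κ * (t - s)) * exp (κ * s) by rw [← exp_add]; ring_nf]
    ring
  calc exp (κ * t) * y t ≤ exp (κ * t) * (f t + ∫ s in 0..t, g (t - s) * y s) := by gcongr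
    _ ≤ _ := by rw [mul_add, hint]; linarith

lemma exists_exp_decay_of_renewal {f g y : ℝ → ℝ} {A γ : ℝ} (hγ : 0 < γ) (hA : 0 ≤ A)
    (hg0 : ∀ u ≥ 0, 0 ≤ g u) (hg : IntegrableOn (fun u => exp (γ * u) * g u) (Ioi 0))
    (hg1 : ∫ u in Ioi 0, g u < 1) (hf : ∀ t ≥ 0, f t ≤ A * exp (-γ * t))
    (hy0 : ∀ t ≥ 0, 0 ≤ y t) (hybdd : ∀ T, ∃ K, ∀ t ∈ Icc 0 T, y t ≤ K)
    (hy : ∀ t ≥ 0, y t ≤ f t + ∫ s in 0..t, g (t - s) * y s) :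
    ∃ κ ∈ Ioc 0 γ, ∃ D, ∀ t ≥ 0, y t ≤ D * exp (-κ * t) := by
  obtain ⟨κ, hκ, hint, hθ⟩ := exists_integral_exp_mul_lt hγ hg hg1
  have hzbdd (T : ℝ) : ∃ K, ∀ t ∈ Icc 0 T, exp (κ * t) * y t ≤ K := by
    obtain ⟨K, hK⟩ := hybdd T
    refine ⟨exp (κ * T) * K, fun t ht => ?_⟩
    have : exp (κ * t) ≤ exp (κ * T) := by gcongr; exacts [hκ.1.le, ht.2]
    calc exp (κ * t) * y t ≤ exp (κ * T) * y t := by gcongr; exact hy0 t ht.1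
      _ ≤ exp (κ * T) * K := by gcongr; exact hK t ht
  have hz := le_div_one_sub_of_le_add_integral (z := fun t => exp (κ * t) * y t)
    (fun u hu => mul_nonneg (exp_pos _).le (hg0 u hu)) hint hθ
    (fun t ht => mul_nonneg (exp_pos _).le (hy0 t ht)) hzbdd
    (fun t ht => exp_mul_le_add_integral
      ((hf t ht).trans (by gcongr; nlinarith [hκ.2])) (hy t ht))
  refine ⟨κ, hκ, A / (1 - ∫ u in Ioi 0, exp (κ * u) * g u), fun t ht => ?_⟩
  calc y t = exp (-κ * t) * (exp (κ * t) * y t) := by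
        rw [← mul_assoc, ← exp_add]; simp
    _ ≤ exp (-κ * t) * (A / (1 - ∫ u in Ioi 0, exp (κ * u) * g u)) := by gcongr; exact hz t ht
    _ = _ := mul_comm _ _

lemma integral_mul_le_mul_exp {a b : ℝ → ℝ} {c d κ μ t : ℝ} (hκμ : κ < μ) (ht : 0 ≤ t)
    (ha0 : ∀ u ≥ 0, 0 ≤ a u) (ha : ∀ u ≥ 0, a u ≤ c * exp (-μ * u))
    (hb0 : ∀ s ≥ 0, 0 ≤ b s) (hb : ∀ s ≥ 0, b s ≤ d * exp (-κ * s)) :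
    ∫ s in 0..t, a (t - s) * b s ≤ c * d / (μ - κ) * exp (-κ * t) := by
  have hc : 0 ≤ c := by simpa using (ha0 0 le_rfl).trans (ha 0 le_rfl)
  have hd : 0 ≤ d := by simpa using (hb0 0 le_rfl).trans (hb 0 le_rfl)
  calc ∫ s in 0..t, a (t - s) * b s
      ≤ ∫ s in 0..t, c * d * exp (-κ * t) * exp (-(μ - κ) * (t - s)) := by
        refine intervalIntegral.integral_mono_of_nonneg ht
          (fun s hs => mul_nonneg (ha0 _ (by linarith [hs.2])) (hb0 s hs.1.le))
          (fun s hs => ?_) (Continuous.intervalIntegrable (by fun_prop) _ _)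
        have hexp :
            exp (-μ * (t - s)) * exp (-κ * s) = exp (-κ * t) * exp (-(μ - κ) * (t - s)) := by
          rw [← exp_add, ← exp_add]; ring_nf
        calc a (t - s) * b s ≤ c * exp (-μ * (t - s)) * (d * exp (-κ * s)) :=
              mul_le_mul (ha _ (by linarith [hs.2])) (hb s hs.1.le) (hb0 s hs.1.le) (by positivity)
          _ = c * d * exp (-κ * t) * exp (-(μ - κ) * (t - s)) := by linear_combination c * d * hexp
    _ = c * d * exp (-κ * t) * ∫ u in 0..t, exp (-(μ - κ) * u) := by
        rw [intervalIntegral.integral_const_mul,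
          intervalIntegral.integral_comp_sub_left (fun u => exp (-(μ - κ) * u))]
        simp
    _ ≤ c * d * exp (-κ * t) * ∫ u in Ioi 0, exp (-(μ - κ) * u) := by
        gcongr
        rw [intervalIntegral.integral_of_le ht]
        exact setIntegral_mono_set (exp_neg_integrableOn_Ioi 0 (by linarith))
          (ae_of_all _ fun u => (exp_pos _).le) Ioc_subset_Ioi_self.eventuallyLE
    _ = c * d / (μ - κ) * exp (-κ * t) := by
        rw [integral_exp_mul_Ioi (by linarith)]
        field_simp
        simp

lemma sq_add_integral_le_mul_exp {x r y : ℝ → ℝ} {C D γ κ t : ℝ} (hκ : κ < 2 * γ) (ht : 0 ≤ t)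
    (hx : |x t| ≤ C * exp (-γ * t)) (hr : ∀ u ≥ 0, |r u| ≤ C * exp (-γ * u))
    (hy0 : ∀ s ≥ 0, 0 ≤ y s) (hy : ∀ s ≥ 0, y s ≤ D * exp (-κ * s)) :
    0 ≤ x t ^ 2 + ∫ s in 0..t, r (t - s) ^ 2 * y s ∧
      x t ^ 2 + ∫ s in 0..t, r (t - s) ^ 2 * y s ≤
        (C ^ 2 + C ^ 2 * D / (2 * γ - κ)) * exp (-κ * t) := by
  have hx2 : x t ^ 2 ≤ C ^ 2 * exp (-κ * t) :=
    (sq_le_mul_exp_of_abs_le hx).trans (by gcongr)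
  have hconv := integral_mul_le_mul_exp (a := fun u => r u ^ 2) hκ ht (fun u _ => sq_nonneg _)
    (fun u hu => sq_le_mul_exp_of_abs_le (hr u hu)) hy0 hy
  have hconv0 : 0 ≤ ∫ s in 0..t, r (t - s) ^ 2 * y s :=
    intervalIntegral.integral_nonneg ht fun s hs => mul_nonneg (sq_nonneg _) (hy0 s hs.1)
  exact ⟨by positivity, (add_le_add hx2 hconv).trans_eq (add_mul _ _ _).symm⟩

lemma tendsto_exp_mul_of_le_mul_exp {M : ℝ → ℝ} {E κ κ' : ℝ} (hκ : κ' < κ)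
    (hM : ∀ᶠ t in atTop, 0 ≤ M t ∧ M t ≤ E * exp (-κ * t)) :
    Tendsto (fun t => exp (κ' * t) * M t) atTop (𝓝 0) := by
  have hlim : Tendsto (fun t => E * exp (-(κ - κ') * t)) atTop (𝓝 0) := by
    simpa using (tendsto_exp_atBot.comp
      (tendsto_id.const_mul_atTop_of_neg (by linarith : -(κ - κ') < 0))).const_mul E
  refine tendsto_of_tendsto_of_tendsto_of_le_of_le' tendsto_const_nhds hlim ?_ ?_
  · filter_upwards [hM] with t ht using mul_nonneg (exp_pos _).le ht.1
  · filter_upwards [hM] with t ht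
    calc exp (κ' * t) * M t ≤ exp (κ' * t) * (E * exp (-κ * t)) := by gcongr; exact ht.2
      _ = E * exp (-(κ - κ') * t) := by rw [mul_left_comm, ← exp_add]; ring_nf

theorem stmt0_general (α : ℝ) (ν : MeasureTheory.SignedMeasure ℝ)
    (C γ : ℝ) (hγ : 0 < γ)
    (r : ℝ → ℝ) (hrmeas : Measurable r) (hrneg : ∀ u < (0:ℝ), r u = 0)
    (hrdecay : ∀ t ≥ (0:ℝ), |r t| ≤ C * Real.exp (-γ * t))
    (x : ℝ → ℝ) (hxcont : Continuous x)
    (hxdecay : ∀ t ≥ (0:ℝ), |x t| ≤ C * Real.exp (-γ * t))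
    (f g : ℝ → ℝ)
    (hf : ∀ t ≥ (0:ℝ), f t = (Gν α ν x t) ^ 2)
    (hg : ∀ t ≥ (0:ℝ), g t = (Gν α ν r t) ^ 2)
    (y : ℝ → ℝ) (hynn : ∀ t ≥ (0:ℝ), 0 ≤ y t)
    (hybdd : ∀ T : ℝ, ∃ K : ℝ, ∀ t ∈ Set.Icc (0:ℝ) T, y t ≤ K)
    (hren : ∀ t ≥ (0:ℝ), y t = f t + ∫ s in (0:ℝ)..t, g (t - s) * y s)
    (M : ℝ → ℝ)
    (hM : ∀ t ≥ (0:ℝ), M t = (x t) ^ 2 + ∫ s in (0:ℝ)..t, (r (t - s)) ^ 2 * y s)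
    (hdefective : (∫ s in Set.Ioi (0:ℝ), g s) < 1) :
    ∃ κ > (0:ℝ), Tendsto (fun t => Real.exp (κ * t) * M t) atTop (nhds 0) := by
  obtain ⟨Kx, hKx⟩ := isCompact_Icc.exists_bound_of_continuousOn hxcont.continuousOn
  have hx : ∀ s ≥ -α, |x s| ≤ max C Kx * exp (-γ * s) :=
    abs_le_max_mul_exp hγ.le (fun s hs => hKx s (Ico_subset_Icc_self hs)) hxdecay
  have hr : ∀ s ≥ -α, |r s| ≤ max C 0 * exp (-γ * s) :=
    abs_le_max_mul_exp hγ.le (fun s hs => by simp [hrneg s hs.2]) hrdecay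
  have hf' (t : ℝ) (ht : t ≥ 0) :
      f t ≤ (max C Kx * exp (γ * α) * ν.totalVariation.real (Icc (-α) 0)) ^ 2 * exp (-γ * t) := by
    rw [hf t ht]
    exact (sq_Gν_le hγ.le fun s hs => hx s (by linarith)).trans (by gcongr; nlinarith)
  have hg' (t : ℝ) (ht : t ≥ 0) : g t ≤
      (max C 0 * exp (γ * α) * ν.totalVariation.real (Icc (-α) 0)) ^ 2 * exp (-(2 * γ) * t) :=
    hg t ht ▸ sq_Gν_le hγ.le fun s hs => hr s (by linarith)
  have hgm : AEStronglyMeasurable g (volume.restrict (Ioi 0)) :=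
    ((measurable_Gν hrmeas).pow_const 2).aestronglyMeasurable.congr
      ((ae_restrict_iff' measurableSet_Ioi).2 (ae_of_all _ fun t ht => (hg t (le_of_lt ht)).symm))
  obtain ⟨κ, hκ, D, hyD⟩ := exists_exp_decay_of_renewal hγ (by positivity)
    (fun t ht => hg t ht ▸ sq_nonneg _)
    (integrableOn_exp_mul_of_le_exp hγ hgm (fun t ht => hg t ht.le ▸ sq_nonneg _)
      fun t ht => hg' t ht.le)
    hdefective hf' hynn hybdd fun t ht => (hren t ht).le
  exact ⟨κ / 2, half_pos hκ.1, tendsto_exp_mul_of_le_mul_exp (half_lt_self hκ.1)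
    ((eventually_ge_atTop 0).mono fun t ht => hM t ht ▸
      sq_add_integral_le_mul_exp (by linarith [hκ.2]) ht (hxdecay t ht) hrdecay hynn hyD)⟩

/-- Deterministic core of Theorem 3.2(a): defective case. -/
theorem stmt0 (α : ℝ) (hα : 0 ≤ α) (ν : MeasureTheory.SignedMeasure ℝ)
    (C γ : ℝ) (hC : 0 < C) (hγ : 0 < γ)
    (r : ℝ → ℝ) (hrmeas : Measurable r) (hrneg : ∀ u < (0:ℝ), r u = 0)
    (hrdecay : ∀ t ≥ (0:ℝ), |r t| ≤ C * Real.exp (-γ * t))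
    (x : ℝ → ℝ) (hxcont : Continuous x)
    (hxdecay : ∀ t ≥ (0:ℝ), |x t| ≤ C * Real.exp (-γ * t))
    (f g : ℝ → ℝ)
    (hf : ∀ t ≥ (0:ℝ), f t = (Gν α ν x t) ^ 2)
    (hg : ∀ t ≥ (0:ℝ), g t = (Gν α ν r t) ^ 2)
    (y : ℝ → ℝ) (hymeas : Measurable y) (hynn : ∀ t ≥ (0:ℝ), 0 ≤ y t)
    (hybdd : ∀ T : ℝ, ∃ K : ℝ, ∀ t ∈ Set.Icc (0:ℝ) T, y t ≤ K)
    (hren : ∀ t ≥ (0:ℝ), y t = f t + ∫ s in (0:ℝ)..t, g (t - s) * y s)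
    (M : ℝ → ℝ)
    (hM : ∀ t ≥ (0:ℝ), M t = (x t) ^ 2 + ∫ s in (0:ℝ)..t, (r (t - s)) ^ 2 * y s)
    (hdefective : (∫ s in Set.Ioi (0:ℝ), g s) < 1) :
    ∃ κ > (0:ℝ), Tendsto (fun t => Real.exp (κ * t) * M t) atTop (nhds 0) :=
  stmt0_general α ν C γ hγ r hrmeas hrneg hrdecay x hxcont hxdecay f g hf hg y hynn hybdd hren M hM
    hdefective
end

section
/- (Exponential decay for defective renewal equations, used in the proof of Theorem 3.2(a).) If κ ∈ (0, 2γ) satisfies ∫₀^∞ e^{κs} g(s) ds < 1, then e^{κt}·y(t) → 0 as t → ∞. -/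
/-!
Put `z t = e^{κt} y t` and `G u = e^{κu} g u`. Multiplying the renewal equation by `e^{κt}` gives
the renewal inequality `z ≤ F + G ⋆ z` with `F t = C e^{-(2γ-κ)t} → 0`, and the kernel `G` has mass
`ρ < 1`. Comparing `z` on `[0, t]` with its supremum there bounds `z` uniformly by `sup F / (1 - ρ)`.
If `z ≤ M` after time `T`, split the convolution at `T`: the part before `T` only sees the tail of
`G`, which vanishes as `t → ∞`, so eventually `z ≤ ρ M + ε`. Hence `limsup z ≤ ρ limsup z`, which
forces `limsup z = 0`.
-/

open MeasureTheory Filter Set Topology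

section Kernel

variable {G : ℝ → ℝ} {a b c t : ℝ}

lemma intervalIntegrable_of_integrableOn_Ioi (hG : IntegrableOn G (Ioi c)) (ha : c ≤ a)
    (hb : c ≤ b) : IntervalIntegrable G volume a b :=
  ((integrableOn_Ici_iff_integrableOn_Ioi (by simp)).2 hG |>.mono_set
    fun _ hx => le_trans (le_min ha hb) hx.1).intervalIntegrable

lemma intervalIntegral_le_integral_Ioi (hG : IntegrableOn G (Ioi c)) (hG0 : ∀ u > c, 0 ≤ G u)
    (hca : c ≤ a) (hab : a ≤ b) : ∫ u in a..b, G u ≤ ∫ u in Ioi c, G u := by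
  rw [intervalIntegral.integral_of_le hab]
  exact setIntegral_mono_set hG ((ae_restrict_iff' measurableSet_Ioi).2 (ae_of_all _ hG0))
    (Eventually.of_forall fun x hx => lt_of_le_of_lt hca hx.1)

lemma intervalIntegral_comp_sub_mul_le {z : ℝ → ℝ} {M : ℝ} (hab : a ≤ b)
    (hG : IntervalIntegrable G volume (t - b) (t - a)) (hG0 : ∀ s ∈ Ioc a b, 0 ≤ G (t - s))
    (hz0 : ∀ s ∈ Ioc a b, 0 ≤ z s) (hzM : ∀ s ∈ Ioc a b, z s ≤ M) :
    ∫ s in a..b, G (t - s) * z s ≤ M * ∫ u in (t - b)..(t - a), G u := by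
  have hGt : IntervalIntegrable (fun s => G (t - s)) volume a b := by
    simpa only [sub_sub_cancel] using (hG.comp_sub_left t).symm
  rw [← intervalIntegral.integral_comp_sub_left, ← intervalIntegral.integral_const_mul,
    intervalIntegral.integral_of_le hab, intervalIntegral.integral_of_le hab]
  refine integral_mono_of_nonneg ?_
    (((intervalIntegrable_iff_integrableOn_Ioc_of_le hab).1 hGt).const_mul M) ?_
  · exact (ae_restrict_iff' measurableSet_Ioc).2
      (ae_of_all _ fun s hs => mul_nonneg (hG0 s hs) (hz0 s hs))
  · exact (ae_restrict_iff' measurableSet_Ioc).2 (ae_of_all _ fun s hs => by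
      simpa only [mul_comm M] using mul_le_mul_of_nonneg_left (hzM s hs) (hG0 s hs))

lemma tendsto_intervalIntegral_sub_const_self (hG : IntegrableOn G (Ioi c)) (T : ℝ) :
    Tendsto (fun t => ∫ u in (t - T)..t, G u) atTop (𝓝 0) := by
  have hlim := (intervalIntegral_tendsto_integral_Ioi c hG tendsto_id).sub
    (intervalIntegral_tendsto_integral_Ioi c hG (tendsto_atTop_add_const_right _ (-T) tendsto_id))
  rw [sub_self] at hlim
  refine hlim.congr' ?_
  filter_upwards [eventually_ge_atTop c, eventually_ge_atTop (c + T)] with t htc htT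
  exact intervalIntegral.integral_interval_sub_left
    (intervalIntegrable_of_integrableOn_Ioi hG le_rfl htc)
    (intervalIntegrable_of_integrableOn_Ioi hG le_rfl (by simp only [id]; linarith))

end Kernel

lemma le_div_one_sub_of_forall_le_add_mul {z : ℝ → ℝ} {A ρ t : ℝ} (hρ : ρ < 1) (hz0 : 0 ≤ z 0)
    (hloc : ∀ t, BddAbove (z '' Icc 0 t))
    (hstep : ∀ t ≥ 0, ∀ M ≥ 0, (∀ s ∈ Icc 0 t, z s ≤ M) → z t ≤ A + ρ * M) (ht : 0 ≤ t) :
    z t ≤ A / (1 - ρ) := by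
  set M := sSup (z '' Icc 0 t)
  have hzM : ∀ s ∈ Icc 0 t, z s ≤ M := fun s hs => le_csSup (hloc t) ⟨s, hs, rfl⟩
  have hM0 : 0 ≤ M := hz0.trans (hzM 0 ⟨le_rfl, ht⟩)
  have hMA : M ≤ A + ρ * M := csSup_le ⟨z 0, 0, ⟨le_rfl, ht⟩, rfl⟩ <| by
    rintro _ ⟨s, hs, rfl⟩
    exact hstep s hs.1 M hM0 fun u hu => hzM u ⟨hu.1, hu.2.trans hs.2⟩
  rw [le_div_iff₀ (by linarith)]
  nlinarith [hzM t ⟨ht, le_rfl⟩]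

lemma tendsto_zero_of_eventually_le_mul_add {α : Type*} {l : Filter α} [l.NeBot] {z : α → ℝ}
    {ρ : ℝ} (hρ : ρ < 1) (hz0 : ∀ᶠ x in l, 0 ≤ z x) (hbdd : IsBoundedUnder (· ≤ ·) l z)
    (hstep : ∀ M ≥ 0, (∀ᶠ x in l, z x ≤ M) → ∀ ε > 0, ∀ᶠ x in l, z x ≤ ρ * M + ε) :
    Tendsto z l (𝓝 0) := by
  have hbdd' : IsBoundedUnder (· ≥ ·) l z := isBoundedUnder_of_eventually_ge hz0
  set L := limsup z l
  have hL0 : 0 ≤ L := le_limsup_of_frequently_le hz0.frequently hbdd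
  have hLρ : L ≤ ρ * L := le_of_forall_pos_le_add fun ε hε => by
    have hzL : ∀ᶠ x in l, z x ≤ L + ε / 2 :=
      (eventually_lt_of_limsup_lt (by linarith) hbdd).mono fun _ => le_of_lt
    have hLε := limsup_le_of_le hbdd'.isCoboundedUnder_le
      (hstep (L + ε / 2) (by linarith) hzL (ε / 2) (by linarith))
    nlinarith
  have hL : L ≤ 0 := by nlinarith
  exact tendsto_of_le_liminf_of_limsup_le (le_liminf_of_le hbdd.isCoboundedUnder_ge hz0) hL
    hbdd hbdd'

section Renewal

variable {F G z : ℝ → ℝ} {A : ℝ}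

lemma renewal_le_div_one_sub (hG0 : ∀ u ≥ 0, 0 ≤ G u) (hG : IntegrableOn G (Ioi 0))
    (hρ : ∫ u in Ioi 0, G u < 1) (hFA : ∀ t ≥ 0, F t ≤ A) (hz0 : ∀ t ≥ 0, 0 ≤ z t)
    (hloc : ∀ t, BddAbove (z '' Icc 0 t))
    (hren : ∀ t ≥ 0, z t ≤ F t + ∫ s in (0:ℝ)..t, G (t - s) * z s) {t : ℝ} (ht : 0 ≤ t) :
    z t ≤ A / (1 - ∫ u in Ioi 0, G u) := by
  refine le_div_one_sub_of_forall_le_add_mul hρ (hz0 0 le_rfl) hloc (fun t ht M hM hzM => ?_) ht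
  have hconv : ∫ s in (0:ℝ)..t, G (t - s) * z s ≤ M * ∫ u in (t - t)..(t - 0), G u :=
    intervalIntegral_comp_sub_mul_le ht
      (intervalIntegrable_of_integrableOn_Ioi hG (by simp) (by simpa using ht))
      (fun s hs => hG0 _ (by linarith [hs.2])) (fun s hs => hz0 s hs.1.le)
      (fun s hs => hzM s (Ioc_subset_Icc_self hs))
  rw [sub_self, sub_zero] at hconv
  have hmass := intervalIntegral_le_integral_Ioi hG (fun u hu => hG0 u hu.le) le_rfl ht
  linarith [hren t ht, hFA t ht, mul_le_mul_of_nonneg_left hmass hM]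

lemma renewal_le_of_eventually_le (hG0 : ∀ u ≥ 0, 0 ≤ G u) (hG : IntegrableOn G (Ioi 0))
    (hz : Measurable z) (hz0 : ∀ t ≥ 0, 0 ≤ z t) {B : ℝ} (hzB : ∀ t ≥ 0, z t ≤ B)
    (hren : ∀ t ≥ 0, z t ≤ F t + ∫ s in (0:ℝ)..t, G (t - s) * z s)
    {T M t : ℝ} (hT : 0 ≤ T) (hM : 0 ≤ M) (hzM : ∀ s ≥ T, z s ≤ M) (ht : T ≤ t) :
    z t ≤ F t + B * (∫ u in (t - T)..t, G u) + (∫ u in Ioi 0, G u) * M := by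
  have ht0 : 0 ≤ t := hT.trans ht
  have hGt : IntervalIntegrable G volume 0 t :=
    intervalIntegrable_of_integrableOn_Ioi hG le_rfl ht0
  have hint : IntervalIntegrable (fun s => G (t - s) * z s) volume 0 t := by
    have hGt' : IntegrableOn (fun s => G (t - s)) (Ioc 0 t) := by
      rw [← intervalIntegrable_iff_integrableOn_Ioc_of_le ht0]
      simpa only [sub_self, sub_zero] using (hGt.comp_sub_left t).symm
    refine (intervalIntegrable_iff_integrableOn_Ioc_of_le ht0).2 <|
      hGt'.mul_bdd (c := B) hz.aestronglyMeasurable ((ae_restrict_iff' measurableSet_Ioc).2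
        (ae_of_all _ fun s hs => ?_))
    rw [Real.norm_of_nonneg (hz0 s hs.1.le)]
    exact hzB s hs.1.le
  have hsplit := intervalIntegral.integral_add_adjacent_intervals
    (hint.mono_set (uIcc_subset_uIcc left_mem_uIcc (mem_uIcc_of_le hT ht)))
    (hint.mono_set (uIcc_subset_uIcc (mem_uIcc_of_le hT ht) right_mem_uIcc))
  have hearly : ∫ s in (0:ℝ)..T, G (t - s) * z s ≤ B * ∫ u in (t - T)..(t - 0), G u :=
    intervalIntegral_comp_sub_mul_le hT
      (intervalIntegrable_of_integrableOn_Ioi hG (by linarith) (by linarith))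
      (fun s hs => hG0 _ (by linarith [hs.2])) (fun s hs => hz0 s hs.1.le)
      (fun s hs => hzB s hs.1.le)
  have hlate : ∫ s in T..t, G (t - s) * z s ≤ M * ∫ u in (t - t)..(t - T), G u :=
    intervalIntegral_comp_sub_mul_le ht
      (intervalIntegrable_of_integrableOn_Ioi hG (by simp) (by linarith))
      (fun s hs => hG0 _ (by linarith [hs.2])) (fun s hs => hz0 s (hT.trans hs.1.le))
      (fun s hs => hzM s hs.1.le)
  rw [sub_zero] at hearly
  rw [sub_self] at hlate
  have hmass := intervalIntegral_le_integral_Ioi hG (fun u hu => hG0 u hu.le) le_rfl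
    (sub_nonneg.2 ht)
  linarith [hren t ht0, mul_le_mul_of_nonneg_left hmass hM]

theorem tendsto_atTop_zero_of_renewal_le (hG0 : ∀ u ≥ 0, 0 ≤ G u) (hG : IntegrableOn G (Ioi 0))
    (hρ : ∫ u in Ioi 0, G u < 1) (hFA : ∀ t ≥ 0, F t ≤ A) (hF : Tendsto F atTop (𝓝 0))
    (hz : Measurable z) (hz0 : ∀ t ≥ 0, 0 ≤ z t) (hloc : ∀ t, BddAbove (z '' Icc 0 t))
    (hren : ∀ t ≥ 0, z t ≤ F t + ∫ s in (0:ℝ)..t, G (t - s) * z s) :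
    Tendsto z atTop (𝓝 0) := by
  set B := A / (1 - ∫ u in Ioi 0, G u)
  have hzB : ∀ t ≥ 0, z t ≤ B := fun t ht =>
    renewal_le_div_one_sub hG0 hG hρ hFA hz0 hloc hren ht
  refine tendsto_zero_of_eventually_le_mul_add hρ (eventually_ge_atTop 0 |>.mono hz0)
    ⟨B, eventually_map.2 (eventually_ge_atTop 0 |>.mono hzB)⟩ fun M hM hzM ε hε => ?_
  obtain ⟨T, hT⟩ := eventually_atTop.1 (hzM.and (eventually_ge_atTop 0))
  have hsmall : Tendsto (fun t => F t + B * ∫ u in (t - T)..t, G u) atTop (𝓝 0) := by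
    simpa using hF.add ((tendsto_intervalIntegral_sub_const_self hG T).const_mul B)
  filter_upwards [hsmall.eventually (ge_mem_nhds hε), eventually_ge_atTop T] with t hFt ht
  have hT0 : 0 ≤ T := (hT T le_rfl).2
  linarith [renewal_le_of_eventually_le hG0 hG hz hz0 hzB hren hT0 hM
    (fun s hs => (hT s hs).1) ht]

end Renewal

lemma exp_mul_le_of_le_exp_neg_mul {a κ C t x : ℝ} (hx : x ≤ C * Real.exp (-a * t)) :
    Real.exp (κ * t) * x ≤ C * Real.exp (-(a - κ) * t) :=
  calc Real.exp (κ * t) * x ≤ Real.exp (κ * t) * (C * Real.exp (-a * t)) :=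
        mul_le_mul_of_nonneg_left hx (Real.exp_nonneg _)
    _ = C * Real.exp (-(a - κ) * t) := by rw [mul_left_comm, ← Real.exp_add]; ring_nf

lemma integrableOn_Ioi_exp_mul {g : ℝ → ℝ} {a κ C : ℝ} (hκ : κ < a) (hg : Measurable g)
    (hg0 : ∀ t ≥ 0, 0 ≤ g t) (hgC : ∀ t ≥ 0, g t ≤ C * Real.exp (-a * t)) :
    IntegrableOn (fun t => Real.exp (κ * t) * g t) (Ioi 0) := by
  refine Integrable.mono' ((exp_neg_integrableOn_Ioi 0 (sub_pos.2 hκ)).const_mul C)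
    ((measurable_const_mul κ).exp.mul hg).aestronglyMeasurable
    ((ae_restrict_iff' measurableSet_Ioi).2 (ae_of_all _ fun t ht => ?_))
  rw [Real.norm_of_nonneg (mul_nonneg (Real.exp_nonneg _) (hg0 t (le_of_lt ht)))]
  exact exp_mul_le_of_le_exp_neg_mul (hgC t (le_of_lt ht))

lemma bddAbove_exp_mul_image_Icc {y : ℝ → ℝ} {κ T K : ℝ} (hκ : 0 ≤ κ)
    (hy : ∀ t ∈ Icc 0 T, y t ≤ K) : BddAbove ((fun t => Real.exp (κ * t) * y t) '' Icc 0 T) := by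
  refine ⟨Real.exp (κ * T) * max K 0, ?_⟩
  rintro _ ⟨t, ht, rfl⟩
  calc Real.exp (κ * t) * y t ≤ Real.exp (κ * t) * max K 0 :=
        mul_le_mul_of_nonneg_left ((hy t ht).trans (le_max_left _ _)) (Real.exp_nonneg _)
    _ ≤ Real.exp (κ * T) * max K 0 :=
        mul_le_mul_of_nonneg_right (Real.exp_le_exp.2 (mul_le_mul_of_nonneg_left ht.2 hκ))
          (le_max_right _ _)

lemma exp_mul_intervalIntegral_comp_sub_mul (κ a t : ℝ) (g y : ℝ → ℝ) :
    Real.exp (κ * t) * ∫ s in a..t, g (t - s) * y s =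
      ∫ s in a..t, Real.exp (κ * (t - s)) * g (t - s) * (Real.exp (κ * s) * y s) := by
  rw [← intervalIntegral.integral_const_mul]
  refine intervalIntegral.integral_congr fun s _ => ?_
  have hsplit : Real.exp (κ * t) = Real.exp (κ * (t - s)) * Real.exp (κ * s) := by
    rw [← Real.exp_add]; congr 1; ring
  simp only [hsplit]
  ring

theorem stmt6_general (C γ κ : ℝ) (hC : 0 < C) (hκpos : 0 < κ) (hκlt : κ < 2 * γ)
    (f g : ℝ → ℝ) (hgmeas : Measurable g)
    (hgnn : ∀ t ≥ (0:ℝ), 0 ≤ g t)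
    (hfb : ∀ t ≥ (0:ℝ), f t ≤ C * Real.exp (-(2 * γ) * t))
    (hgb : ∀ t ≥ (0:ℝ), g t ≤ C * Real.exp (-(2 * γ) * t))
    (y : ℝ → ℝ) (hymeas : Measurable y) (hynn : ∀ t ≥ (0:ℝ), 0 ≤ y t)
    (hybdd : ∀ T : ℝ, ∃ K : ℝ, ∀ t ∈ Set.Icc (0:ℝ) T, y t ≤ K)
    (hren : ∀ t ≥ (0:ℝ), y t = f t + ∫ s in (0:ℝ)..t, g (t - s) * y s)
    (hdefective : (∫ s in Set.Ioi (0:ℝ), Real.exp (κ * s) * g s) < 1) :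
    Tendsto (fun t => Real.exp (κ * t) * y t) atTop (nhds 0) := by
  have hδ : -(2 * γ - κ) < 0 := by linarith
  refine tendsto_atTop_zero_of_renewal_le (A := C)
    (F := fun t => C * Real.exp (-(2 * γ - κ) * t)) (G := fun u => Real.exp (κ * u) * g u)
    (fun u hu => mul_nonneg (Real.exp_nonneg _) (hgnn u hu))
    (integrableOn_Ioi_exp_mul hκlt hgmeas hgnn hgb) hdefective
    (fun t ht => mul_le_of_le_one_right hC.le (Real.exp_le_one_iff.2 (by nlinarith))) ?_
    ((measurable_const_mul κ).exp.mul hymeas)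
    (fun t ht => mul_nonneg (Real.exp_nonneg _) (hynn t ht))
    (fun T => bddAbove_exp_mul_image_Icc hκpos.le (hybdd T).choose_spec) fun t ht => ?_
  · simpa using (Real.tendsto_exp_atBot.comp (tendsto_id.const_mul_atTop_of_neg hδ)).const_mul C
  · rw [hren t ht, mul_add, exp_mul_intervalIntegral_comp_sub_mul]
    exact add_le_add_left (exp_mul_le_of_le_exp_neg_mul (hfb t ht)) _

/-- Exponential decay for defective renewal equations, used in the proof of
Theorem 3.2(a). -/
theorem stmt6 (C γ κ : ℝ) (hC : 0 < C) (hγ : 0 < γ) (hκpos : 0 < κ) (hκlt : κ < 2 * γ)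
    (f g : ℝ → ℝ) (hfmeas : Measurable f) (hgmeas : Measurable g)
    (hfnn : ∀ t ≥ (0:ℝ), 0 ≤ f t) (hgnn : ∀ t ≥ (0:ℝ), 0 ≤ g t)
    (hfb : ∀ t ≥ (0:ℝ), f t ≤ C * Real.exp (-(2 * γ) * t))
    (hgb : ∀ t ≥ (0:ℝ), g t ≤ C * Real.exp (-(2 * γ) * t))
    (y : ℝ → ℝ) (hymeas : Measurable y) (hynn : ∀ t ≥ (0:ℝ), 0 ≤ y t)
    (hybdd : ∀ T : ℝ, ∃ K : ℝ, ∀ t ∈ Set.Icc (0:ℝ) T, y t ≤ K)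
    (hren : ∀ t ≥ (0:ℝ), y t = f t + ∫ s in (0:ℝ)..t, g (t - s) * y s)
    (hdefective : (∫ s in Set.Ioi (0:ℝ), Real.exp (κ * s) * g s) < 1) :
    Tendsto (fun t => Real.exp (κ * t) * y t) atTop (nhds 0) :=
  stmt6_general C γ κ hC hκpos hκlt f g hgmeas hgnn hfb hgb y hymeas hynn hybdd hren hdefective
end

section
/- (Exponentially weighted convolution lemma used in the proof of Theorem 3.2(a).) Let γ > 0, C > 0 and 0 < κ < 2γ. Let h : [0,∞) → ℝ be Borel measurable with |h(s)| ≤ C·e^{−2γs} for all s ≥ 0, and let y : [0,∞) → ℝ be Borel measurable, bounded on compact intervals, with e^{κt}·y(t) → 0 as t → ∞. Then e^{κt}·∫₀^t h(s)·y(t−s) ds → 0 as t → ∞. -/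
/-! With `k s = exp (κ s) h s` and `z u = exp (κ u) y u`, the weighted integral is the convolution
`∫₀ᵗ k s z (t - s) ds`. Since `κ < 2γ`, `k` is integrable on `(0, ∞)`; `z` is bounded on `[0, ∞)`
and tends to `0`, so the convolution tends to `0` by dominated convergence. -/

open MeasureTheory Filter Set

lemma exists_forall_nonneg_abs_le_of_tendsto {z : ℝ → ℝ} {l : ℝ}
    (hloc : ∀ T : ℝ, ∃ K : ℝ, ∀ t ∈ Icc (0:ℝ) T, |z t| ≤ K)
    (hz : Tendsto z atTop (nhds l)) :
    ∃ M : ℝ, ∀ t, 0 ≤ t → |z t| ≤ M := by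
  obtain ⟨N, hN⟩ := eventually_atTop.1 (hz.abs.eventually (eventually_le_nhds (lt_add_one |l|)))
  obtain ⟨K, hK⟩ := hloc N
  refine ⟨max K (|l| + 1), fun t ht => ?_⟩
  rcases le_total t N with htN | hNt
  · exact (hK t ⟨ht, htN⟩).trans (le_max_left _ _)
  · exact (hN t hNt).trans (le_max_right _ _)

theorem tendsto_intervalIntegral_mul_sub_atTop {k z : ℝ → ℝ} {M : ℝ}
    (hk : IntegrableOn k (Ioi 0)) (hz : Measurable z) (hM : ∀ u, 0 ≤ u → |z u| ≤ M)
    (hz0 : Tendsto z atTop (nhds 0)) :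
    Tendsto (fun t => ∫ s in (0:ℝ)..t, k s * z (t - s)) atTop (nhds 0) := by
  set F : ℝ → ℝ → ℝ := fun t => (Iic t).indicator fun s => k s * z (t - s)
  have hF : ∀ᶠ t in atTop, ∫ s in Ioi 0, F t s = ∫ s in (0:ℝ)..t, k s * z (t - s) := by
    filter_upwards [eventually_ge_atTop 0] with t ht
    rw [intervalIntegral.integral_of_le ht, setIntegral_indicator measurableSet_Iic,
      Ioi_inter_Iic]
  refine Tendsto.congr' hF ?_
  have hM0 : 0 ≤ M := (abs_nonneg _).trans (hM 0 le_rfl)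
  have hF_meas : ∀ t, AEStronglyMeasurable (F t) (volume.restrict (Ioi 0)) := fun t =>
    (hk.1.mul (hz.comp (measurable_const.sub measurable_id)).aestronglyMeasurable).indicator
      measurableSet_Iic
  have hF_bound : ∀ t, ∀ᵐ s ∂volume.restrict (Ioi 0), ‖F t s‖ ≤ M * |k s| := by
    intro t
    filter_upwards [ae_restrict_mem measurableSet_Ioi] with s hs
    by_cases hst : s ≤ t
    · simp only [F, indicator_of_mem (mem_Iic.2 hst), Real.norm_eq_abs, abs_mul]
      rw [mul_comm M]
      exact mul_le_mul_of_nonneg_left (hM _ (sub_nonneg.2 hst)) (abs_nonneg _)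
    · simp only [F, indicator_of_notMem (fun h => hst (mem_Iic.1 h)), norm_zero]
      positivity
  have hF_lim : ∀ s, Tendsto (fun t => F t s) atTop (nhds 0) := by
    intro s
    have hshift : Tendsto (fun t => t - s) atTop atTop :=
      tendsto_atTop_add_const_right _ _ tendsto_id
    refine Tendsto.congr' ?_ (by simpa using (hz0.comp hshift).const_mul (k s))
    filter_upwards [eventually_ge_atTop s] with t hst
    simp [F, indicator_of_mem (mem_Iic.2 hst)]
  simpa using tendsto_integral_filter_of_dominated_convergence (fun s => M * |k s|)
    (Eventually.of_forall hF_meas) (Eventually.of_forall hF_bound)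
    (by simpa using hk.norm.const_mul M) (Eventually.of_forall hF_lim)

lemma integrableOn_Ioi_exp_mul_of_abs_le {h : ℝ → ℝ} {a κ C : ℝ} (hκ : κ < a)
    (hh : Measurable h) (hb : ∀ s ≥ (0:ℝ), |h s| ≤ C * Real.exp (-a * s)) :
    IntegrableOn (fun s => Real.exp (κ * s) * h s) (Ioi 0) := by
  refine ((exp_neg_integrableOn_Ioi 0 (sub_pos.2 hκ)).const_mul C).mono'
    (by fun_prop : Measurable fun s => Real.exp (κ * s) * h s).aestronglyMeasurable ?_
  filter_upwards [ae_restrict_mem measurableSet_Ioi] with s hs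
  calc ‖Real.exp (κ * s) * h s‖ = Real.exp (κ * s) * |h s| := by
        rw [Real.norm_eq_abs, abs_mul, abs_of_pos (Real.exp_pos _)]
    _ ≤ Real.exp (κ * s) * (C * Real.exp (-a * s)) :=
        mul_le_mul_of_nonneg_left (hb s (le_of_lt hs)) (Real.exp_pos _).le
    _ = C * Real.exp (-(a - κ) * s) := by
        rw [mul_left_comm, ← Real.exp_add]; ring_nf

theorem stmt8_general (γ C κ : ℝ) (hκlt : κ < 2 * γ)
    (h y : ℝ → ℝ) (hhmeas : Measurable h)
    (hhb : ∀ s ≥ (0:ℝ), |h s| ≤ C * Real.exp (-(2 * γ) * s))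
    (hymeas : Measurable y)
    (hybdd : ∀ T : ℝ, ∃ K : ℝ, ∀ t ∈ Set.Icc (0:ℝ) T, |y t| ≤ K)
    (hyto : Tendsto (fun t => Real.exp (κ * t) * y t) atTop (nhds 0)) :
    Tendsto (fun t => Real.exp (κ * t) * ∫ s in (0:ℝ)..t, h s * y (t - s))
      atTop (nhds 0) := by
  have hzloc : ∀ T : ℝ, ∃ K : ℝ, ∀ t ∈ Icc (0:ℝ) T, |Real.exp (κ * t) * y t| ≤ K := by
    intro T
    obtain ⟨K, hK⟩ := hybdd T
    refine ⟨Real.exp (|κ| * T) * K, fun t ht => ?_⟩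
    have hexp : Real.exp (κ * t) ≤ Real.exp (|κ| * T) := Real.exp_le_exp.2 <|
      (le_abs_self (κ * t)).trans (by rw [abs_mul, abs_of_nonneg ht.1]; gcongr; exact ht.2)
    rw [abs_mul, abs_of_pos (Real.exp_pos _)]
    exact mul_le_mul hexp (hK t ht) (abs_nonneg _) (Real.exp_pos _).le
  obtain ⟨M, hM⟩ := exists_forall_nonneg_abs_le_of_tendsto hzloc hyto
  have hzmeas : Measurable fun t => Real.exp (κ * t) * y t := by fun_prop
  refine (tendsto_intervalIntegral_mul_sub_atTop
    (integrableOn_Ioi_exp_mul_of_abs_le hκlt hhmeas hhb) hzmeas hM hyto).congr fun t => ?_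
  rw [← intervalIntegral.integral_const_mul]
  congr 1 with s
  rw [show κ * t = κ * s + κ * (t - s) by ring, Real.exp_add]
  ring

/-- Exponentially weighted convolution lemma used in the proof of
Theorem 3.2(a). -/
theorem stmt8 (γ C κ : ℝ) (hγ : 0 < γ) (hC : 0 < C) (hκpos : 0 < κ) (hκlt : κ < 2 * γ)
    (h y : ℝ → ℝ) (hhmeas : Measurable h)
    (hhb : ∀ s ≥ (0:ℝ), |h s| ≤ C * Real.exp (-(2 * γ) * s))
    (hymeas : Measurable y)
    (hybdd : ∀ T : ℝ, ∃ K : ℝ, ∀ t ∈ Set.Icc (0:ℝ) T, |y t| ≤ K)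
    (hyto : Tendsto (fun t => Real.exp (κ * t) * y t) atTop (nhds 0)) :
    Tendsto (fun t => Real.exp (κ * t) * ∫ s in (0:ℝ)..t, h s * y (t - s))
      atTop (nhds 0) :=
  stmt8_general γ C κ hκlt h y hhmeas hhb hymeas hybdd hyto
end

section
/- (Deterministic core of the mean-square stability characterization (3.7) in the Example.) Under the stated setup, M(t) → 0 as t → ∞ if and only if c² + d² + 2cd·e^{bα} < −2b. -/
/-!
On `[0, ∞)` everything is explicit: `f(t) = A e^{2bt}` with `A = x₀² (c + d e^{-bα})²`,
`M(t) = x₀² e^{2bt} + ∫₀ᵗ e^{2b(t-s)} y(s) ds`, and the kernel satisfies `0 ≤ g(v) ≤ C e^{2bv}`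
with total mass `L = ∫₀^∞ g = (c² + d² + 2cd e^{bα}) / (-2b)`, so the criterion reads `L < 1`.
Integrating the renewal equation over `[0, T]` and exchanging the order of integration gives
`∫₀ᵀ y = ∫₀ᵀ f + ∫₀ᵀ y(s) G(T - s) ds`, where `G(u) = ∫₀ᵘ g` increases to `L` with
`L - G(u) ≤ C e^{2bu} / (-2b)`.
If `L < 1` this bounds `∫₀^∞ y`, and dominated convergence sends the convolution in `M` to `0`.
If `L ≥ 1` it gives `∫₀ᵀ f ≤ ∫₀ᵀ y(s) (L - G(T - s)) ds ≤ C/(-2b) · M(T)`, whose left side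
tends to `A / (-2b)`. Here `A > 0`: `c + d e^{-bα} = 0` means `d = -c e^{bα}`, which is either
the excluded case or `c = d = 0`, where `L = 0`.
-/

open MeasureTheory Filter Set Real intervalIntegral Topology

theorem Measurable.integrableOn_Icc_of_abs_le {f : ℝ → ℝ} (hf : Measurable f) {a b K : ℝ}
    (h : ∀ t ∈ Icc a b, |f t| ≤ K) : IntegrableOn f (Icc a b) := by
  refine Measure.integrableOn_of_bounded (M := K) measure_Icc_lt_top.ne hf.aestronglyMeasurable ?_
  filter_upwards [ae_restrict_mem measurableSet_Icc] with t ht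
  exact h t ht

theorem integral_exp_mul {c : ℝ} (hc : c ≠ 0) (a b : ℝ) :
    ∫ x in a..b, exp (c * x) = (exp (c * b) - exp (c * a)) / c := by
  rw [integral_comp_mul_left (fun x => exp x) hc, integral_exp, smul_eq_mul]
  field_simp

theorem tendsto_exp_mul_atTop_zero {a : ℝ} (ha : a < 0) :
    Tendsto (fun t => exp (a * t)) atTop (𝓝 0) :=
  tendsto_exp_atBot.comp (tendsto_id.const_mul_atTop_of_neg ha)

theorem tendsto_integral_exp_mul_sub_mul {a : ℝ} (ha : a < 0) {y : ℝ → ℝ}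
    (hy : IntegrableOn y (Ioi 0)) :
    Tendsto (fun t => ∫ s in (0 : ℝ)..t, exp (a * (t - s)) * y s) atTop (𝓝 0) := by
  set F : ℝ → ℝ → ℝ := fun t => (Iic t).indicator fun s => exp (a * (t - s)) * y s
  have hF : ∀ t ≥ 0, ∫ s in (0 : ℝ)..t, exp (a * (t - s)) * y s = ∫ s in Ioi 0, F t s := by
    intro t ht
    rw [setIntegral_indicator measurableSet_Iic, Ioi_inter_Iic, integral_of_le ht]
  have hlim : Tendsto (fun t => ∫ s in Ioi 0, F t s) atTop (𝓝 (∫ s in Ioi (0 : ℝ), (0 : ℝ))) := by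
    refine tendsto_integral_filter_of_dominated_convergence (fun s => |y s|)
      (Eventually.of_forall fun t => ?_) (Eventually.of_forall fun t => ?_) hy.abs ?_
    · exact ((by fun_prop : Continuous fun s => exp (a * (t - s))).aestronglyMeasurable.mul
        hy.aestronglyMeasurable).indicator measurableSet_Iic
    · refine Eventually.of_forall fun s => ?_
      simp only [F, indicator_apply, mem_Iic]
      split_ifs with hst
      · rw [norm_mul, Real.norm_eq_abs, abs_of_pos (exp_pos _)]
        exact mul_le_of_le_one_left (abs_nonneg _) (exp_le_one_iff.2 (by nlinarith))
      · simp
    · refine Eventually.of_forall fun s => ?_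
      have hexp : Tendsto (fun t => exp (a * (t - s)) * y s) atTop (𝓝 0) := by
        have hshift := (tendsto_exp_mul_atTop_zero ha).comp
          (tendsto_atTop_add_const_right _ (-s) tendsto_id)
        simpa only [sub_eq_add_neg, zero_mul, Function.comp_def, id] using hshift.mul_const (y s)
      refine hexp.congr' ?_
      filter_upwards [eventually_ge_atTop s] with t hst
      simp [F, hst]
  rw [MeasureTheory.integral_zero] at hlim
  exact hlim.congr' (by filter_upwards [eventually_ge_atTop 0] with t ht using (hF t ht).symm)

theorem integrable_prod_ite_sub_mul {g y : ℝ → ℝ} (hg : Measurable g) (hy : Measurable y)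
    {T C : ℝ} (hT : 0 ≤ T) (hgC : ∀ v ∈ Icc 0 T, |g v| ≤ C) (hyi : IntegrableOn y (Ioc 0 T)) :
    Integrable (fun p : ℝ × ℝ => if p.2 ≤ p.1 then g (p.1 - p.2) * y p.2 else 0)
      ((volume.restrict (Ioc 0 T)).prod (volume.restrict (Ioc 0 T))) := by
  refine ((integrable_const C).mul_prod hyi.norm).mono' ?_ ?_
  · exact (Measurable.ite (measurableSet_le measurable_snd measurable_fst)
      ((hg.comp (measurable_fst.sub measurable_snd)).mul (hy.comp measurable_snd))
      measurable_const).aestronglyMeasurable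
  · rw [Measure.prod_restrict]
    filter_upwards [ae_restrict_mem (measurableSet_Ioc.prod measurableSet_Ioc)]
      with ⟨t, s⟩ ⟨ht, hs⟩
    split_ifs with hst
    · rw [norm_mul]
      exact mul_le_mul_of_nonneg_right (hgC _ ⟨by linarith, by linarith [hs.1, ht.2]⟩)
        (norm_nonneg _)
    · simpa using mul_nonneg ((abs_nonneg _).trans (hgC 0 ⟨le_rfl, hT⟩)) (norm_nonneg (y s))

theorem integral_integral_sub_mul_swap {g y : ℝ → ℝ} (hg : Measurable g) (hy : Measurable y)
    {T C : ℝ} (hT : 0 ≤ T) (hgC : ∀ v ∈ Icc 0 T, |g v| ≤ C) (hyi : IntegrableOn y (Ioc 0 T)) :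
    ∫ t in (0 : ℝ)..T, ∫ s in (0 : ℝ)..t, g (t - s) * y s
      = ∫ s in (0 : ℝ)..T, y s * ∫ v in (0 : ℝ)..T - s, g v := by
  set F : ℝ → ℝ → ℝ := fun t s => if s ≤ t then g (t - s) * y s else 0 with hF
  have inner_t : ∀ t ∈ Ioc (0 : ℝ) T,
      ∫ s in Ioc (0 : ℝ) T, F t s = ∫ s in (0 : ℝ)..t, g (t - s) * y s := by
    intro t ht
    have : ∀ s, F t s = (Iic t).indicator (fun s => g (t - s) * y s) s := fun s => by
      simp only [hF, indicator_apply, mem_Iic]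
    simp only [this]
    rw [setIntegral_indicator measurableSet_Iic, Ioc_inter_Iic, inf_eq_right.2 ht.2,
      integral_of_le ht.1.le]
  have inner_s : ∀ s ∈ Ioc (0 : ℝ) T,
      ∫ t in Ioc (0 : ℝ) T, F t s = y s * ∫ v in (0 : ℝ)..T - s, g v := by
    intro s hs
    have : ∀ t, F t s = (Ici s).indicator (fun t => g (t - s) * y s) t := fun t => by
      simp only [hF, indicator_apply, mem_Ici]
    simp only [this]
    have hIcc : Ioc 0 T ∩ Ici s = Icc s T := by
      ext t
      simp only [mem_inter_iff, mem_Ioc, mem_Ici, mem_Icc]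
      exact ⟨fun h => ⟨h.2, h.1.2⟩, fun h => ⟨⟨hs.1.trans_le h.1, h.2⟩, h.1⟩⟩
    rw [setIntegral_indicator measurableSet_Ici, hIcc, integral_Icc_eq_integral_Ioc,
      ← integral_of_le hs.2, intervalIntegral.integral_mul_const,
      integral_comp_sub_right (fun v => g v) s, sub_self, mul_comm]
  rw [integral_of_le hT, integral_of_le hT, ← setIntegral_congr_fun measurableSet_Ioc inner_t,
    ← setIntegral_congr_fun measurableSet_Ioc inner_s,
    integral_integral_swap (integrable_prod_ite_sub_mul hg hy hT hgC hyi)]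

theorem IntervalIntegrable.mul_integral_sub {f g : ℝ → ℝ} {T : ℝ}
    (hf : IntervalIntegrable f volume 0 T) (hg : IntervalIntegrable g volume 0 T) :
    IntervalIntegrable (fun s => f s * ∫ v in (0 : ℝ)..T - s, g v) volume 0 T := by
  refine hf.mul_continuousOn ((continuousOn_primitive_interval' hg left_mem_uIcc).comp
    (continuousOn_const.sub continuousOn_id) fun s hs => ?_)
  simp only [mem_uIcc] at hs ⊢
  rcases hs with h | h
  · exact Or.inl ⟨by linarith, by linarith⟩
  · exact Or.inr ⟨by linarith, by linarith⟩

structure IsExpBoundedKernel (a C : ℝ) (g : ℝ → ℝ) : Prop where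
  neg : a < 0
  measurable : Measurable g
  nonneg : ∀ v ≥ 0, 0 ≤ g v
  le_exp : ∀ v ≥ 0, g v ≤ C * exp (a * v)

structure IsRenewalSolution (a A : ℝ) (g y : ℝ → ℝ) : Prop where
  measurable : Measurable y
  integrableOn_Icc : ∀ T, IntegrableOn y (Icc 0 T)
  eq : ∀ t ≥ 0, y t = A * exp (a * t) + ∫ s in (0 : ℝ)..t, g (t - s) * y s

namespace IsExpBoundedKernel

variable {a C : ℝ} {g : ℝ → ℝ}

theorem integrableOn_Ioi (hg : IsExpBoundedKernel a C g) : IntegrableOn g (Ioi 0) := by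
  refine ((integrableOn_exp_mul_Ioi hg.neg 0).const_mul C).mono'
    hg.measurable.aestronglyMeasurable ?_
  filter_upwards [ae_restrict_mem measurableSet_Ioi] with v hv
  rw [Real.norm_eq_abs, abs_of_nonneg (hg.nonneg v hv.le)]
  exact hg.le_exp v hv.le

theorem intervalIntegrable (hg : IsExpBoundedKernel a C g) {T : ℝ} (hT : 0 ≤ T) :
    IntervalIntegrable g volume 0 T :=
  (intervalIntegrable_iff_integrableOn_Ioc_of_le hT).2
    (hg.integrableOn_Ioi.mono_set Ioc_subset_Ioi_self)

theorem abs_le (hg : IsExpBoundedKernel a C g) {v : ℝ} (hv : 0 ≤ v) : |g v| ≤ C := by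
  have hC : 0 ≤ C := by simpa using (hg.nonneg 0 le_rfl).trans (hg.le_exp 0 le_rfl)
  rw [abs_of_nonneg (hg.nonneg v hv)]
  exact (hg.le_exp v hv).trans
    (mul_le_of_le_one_right hC (exp_le_one_iff.2 (mul_nonpos_of_nonpos_of_nonneg hg.neg.le hv)))

theorem intervalIntegral_le_integral_Ioi (hg : IsExpBoundedKernel a C g) {u : ℝ} (hu : 0 ≤ u) :
    ∫ v in (0 : ℝ)..u, g v ≤ ∫ v in Ioi 0, g v := by
  rw [← integral_Ioi_sub_Ioi hg.integrableOn_Ioi hu, sub_le_self_iff]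
  exact setIntegral_nonneg measurableSet_Ioi fun v hv => hg.nonneg v (hu.trans hv.le)

theorem integral_Ioi_sub_intervalIntegral_le (hg : IsExpBoundedKernel a C g) {u : ℝ}
    (hu : 0 ≤ u) : (∫ v in Ioi 0, g v) - ∫ v in (0 : ℝ)..u, g v ≤ C / -a * exp (a * u) := by
  rw [← integral_Ioi_sub_Ioi hg.integrableOn_Ioi hu, sub_sub_cancel]
  calc ∫ v in Ioi u, g v ≤ ∫ v in Ioi u, C * exp (a * v) :=
        setIntegral_mono_on (hg.integrableOn_Ioi.mono_set (Ioi_subset_Ioi hu))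
          ((integrableOn_exp_mul_Ioi hg.neg u).const_mul C) measurableSet_Ioi
          fun v hv => hg.le_exp v (hu.trans hv.le)
    _ = C / -a * exp (a * u) := by
      rw [MeasureTheory.integral_const_mul, integral_exp_mul_Ioi hg.neg]
      ring

end IsExpBoundedKernel

namespace IsRenewalSolution

variable {a A C : ℝ} {g y : ℝ → ℝ}

theorem intervalIntegrable (hy : IsRenewalSolution a A g y) {T : ℝ} (hT : 0 ≤ T) :
    IntervalIntegrable y volume 0 T :=
  (intervalIntegrable_iff_integrableOn_Ioc_of_le hT).2
    ((hy.integrableOn_Icc T).mono_set Ioc_subset_Icc_self)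

theorem integral_eq (hg : IsExpBoundedKernel a C g) (hy : IsRenewalSolution a A g y) {T : ℝ}
    (hT : 0 ≤ T) :
    ∫ t in (0 : ℝ)..T, y t
      = A * ((exp (a * T) - 1) / a) + ∫ s in (0 : ℝ)..T, y s * ∫ v in (0 : ℝ)..T - s, g v := by
  have hforce : IntervalIntegrable (fun t => A * exp (a * t)) volume 0 T :=
    (by fun_prop : Continuous fun t => A * exp (a * t)).intervalIntegrable 0 T
  have hconv : ∫ t in (0 : ℝ)..T, ∫ s in (0 : ℝ)..t, g (t - s) * y s
      = (∫ t in (0 : ℝ)..T, y t) - ∫ t in (0 : ℝ)..T, A * exp (a * t) := by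
    rw [← integral_sub (hy.intervalIntegrable hT) hforce]
    refine integral_congr fun t ht => ?_
    rw [uIcc_of_le hT] at ht
    simp only [hy.eq t ht.1]
    ring
  rw [← integral_integral_sub_mul_swap hg.measurable hy.measurable hT
    (fun v hv => hg.abs_le hv.1) ((hy.integrableOn_Icc T).mono_set Ioc_subset_Icc_self), hconv,
    intervalIntegral.integral_const_mul, integral_exp_mul hg.neg.ne, mul_zero, exp_zero]
  ring

theorem integrableOn_Ioi (hg : IsExpBoundedKernel a C g) (hy : IsRenewalSolution a A g y)
    (hy0 : ∀ t ≥ 0, 0 ≤ y t) (hA : 0 ≤ A) (hL : ∫ v in Ioi 0, g v < 1) :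
    IntegrableOn y (Ioi 0) := by
  set L := ∫ v in Ioi 0, g v
  refine integrableOn_Ioi_of_intervalIntegral_norm_bounded (A / -a / (1 - L)) 0
    (fun T => (hy.integrableOn_Icc T).mono_set Ioc_subset_Icc_self) tendsto_id ?_
  filter_upwards [eventually_ge_atTop 0] with T hT
  have hyI := hy.intervalIntegrable hT
  have hnorm : ∫ t in (0 : ℝ)..T, ‖y t‖ = ∫ t in (0 : ℝ)..T, y t :=
    integral_congr fun t ht => Real.norm_of_nonneg (hy0 t (uIcc_of_le hT ▸ ht).1)
  have hmemory :
      ∫ s in (0 : ℝ)..T, y s * ∫ v in (0 : ℝ)..T - s, g v ≤ L * ∫ s in (0 : ℝ)..T, y s := by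
    rw [← intervalIntegral.integral_const_mul]
    refine integral_mono_on hT (hyI.mul_integral_sub (hg.intervalIntegrable hT))
      (hyI.const_mul L) fun s hs => ?_
    rw [mul_comm L]
    exact mul_le_mul_of_nonneg_left (hg.intervalIntegral_le_integral_Ioi (by linarith [hs.2]))
      (hy0 s hs.1)
  have hforce : A * ((exp (a * T) - 1) / a) ≤ A / -a :=
    calc A * ((exp (a * T) - 1) / a) ≤ A * (-1 / a) := mul_le_mul_of_nonneg_left
          (div_le_div_of_nonpos_of_le hg.neg.le (by linarith [exp_pos (a * T)])) hA
      _ = A / -a := by ring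
  rw [hnorm, le_div_iff₀ (by linarith)]
  linarith [hy.integral_eq hg hT]

theorem integral_forcing_le (hg : IsExpBoundedKernel a C g) (hy : IsRenewalSolution a A g y)
    (hy0 : ∀ t ≥ 0, 0 ≤ y t) (hL : 1 ≤ ∫ v in Ioi 0, g v) {T : ℝ} (hT : 0 ≤ T) :
    A * ((exp (a * T) - 1) / a) ≤ C / -a * ∫ s in (0 : ℝ)..T, exp (a * (T - s)) * y s := by
  have hyI := hy.intervalIntegrable hT
  have hyG := hyI.mul_integral_sub (hg.intervalIntegrable hT)
  have hdefect : A * ((exp (a * T) - 1) / a)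
      = ∫ s in (0 : ℝ)..T, y s * (1 - ∫ v in (0 : ℝ)..T - s, g v) := by
    simp_rw [mul_one_sub]
    rw [integral_sub hyI hyG, hy.integral_eq hg hT]
    ring
  rw [hdefect, ← intervalIntegral.integral_const_mul]
  refine integral_mono_on hT (by simpa only [mul_one_sub] using hyI.sub hyG)
    ((hyI.continuousOn_mul (by fun_prop : Continuous fun s => exp (a * (T - s))).continuousOn
      ).const_mul _) fun s hs => ?_
  have htail := hg.integral_Ioi_sub_intervalIntegral_le (by linarith [hs.2] : 0 ≤ T - s)
  calc y s * (1 - ∫ v in (0 : ℝ)..T - s, g v) ≤ y s * (C / -a * exp (a * (T - s))) :=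
        mul_le_mul_of_nonneg_left (by linarith) (hy0 s hs.1)
    _ = C / -a * (exp (a * (T - s)) * y s) := by ring

theorem not_tendsto (hg : IsExpBoundedKernel a C g) (hy : IsRenewalSolution a A g y)
    (hy0 : ∀ t ≥ 0, 0 ≤ y t) (hA : 0 < A) (hL : 1 ≤ ∫ v in Ioi 0, g v) :
    ¬ Tendsto (fun t => ∫ s in (0 : ℝ)..t, exp (a * (t - s)) * y s) atTop (𝓝 0) := by
  intro hφ
  have hlim := le_of_tendsto_of_tendsto
    (((tendsto_exp_mul_atTop_zero hg.neg).sub_const 1).div_const a |>.const_mul A)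
    (by simpa using hφ.const_mul (C / -a))
    ((eventually_ge_atTop 0).mono fun T hT => hy.integral_forcing_le hg hy0 hL hT)
  have : 0 < A * ((0 - 1) / a) := mul_pos hA (div_pos_of_neg_of_neg (by norm_num) hg.neg)
  linarith

end IsRenewalSolution

theorem exp_mul_sub_eq (b v α : ℝ) : exp (b * (v - α)) = exp (-(b * α)) * exp (b * v) := by
  rw [← exp_add]
  ring_nf

theorem exp_mul_sq (b v : ℝ) : exp (b * v) ^ 2 = exp (2 * b * v) := by
  rw [sq, ← exp_add]
  ring_nf

noncomputable def fundamentalSolution (b t : ℝ) : ℝ := if 0 ≤ t then exp (b * t) else 0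

noncomputable def renewalKernel (b c d α v : ℝ) : ℝ :=
  (c * fundamentalSolution b v + d * fundamentalSolution b (v - α)) ^ 2

section DelayKernel

variable {α b c d : ℝ}

theorem fundamentalSolution_sq {t : ℝ} (ht : 0 ≤ t) :
    fundamentalSolution b t ^ 2 = exp (2 * b * t) := by
  rw [fundamentalSolution, if_pos ht, exp_mul_sq]

theorem measurable_fundamentalSolution (b : ℝ) : Measurable (fundamentalSolution b) :=
  Measurable.ite measurableSet_Ici (by fun_prop) measurable_const

theorem measurable_renewalKernel (b c d α : ℝ) : Measurable (renewalKernel b c d α) := by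
  have := measurable_fundamentalSolution b
  unfold renewalKernel
  fun_prop

theorem renewalKernel_eq {v : ℝ} (hv : 0 ≤ v) :
    renewalKernel b c d α v
      = (c + d * if α ≤ v then exp (-(b * α)) else 0) ^ 2 * exp (2 * b * v) := by
  simp only [renewalKernel, fundamentalSolution, if_pos hv, sub_nonneg, ← exp_mul_sq]
  split_ifs
  · rw [exp_mul_sub_eq]
    ring
  · ring

theorem renewalKernel_le {v : ℝ} (hv : 0 ≤ v) :
    renewalKernel b c d α v ≤ (|c| + |d| * exp (-(b * α))) ^ 2 * exp (2 * b * v) := by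
  have hcoeff : |c + d * if α ≤ v then exp (-(b * α)) else 0| ≤ |c| + |d| * exp (-(b * α)) := by
    refine (abs_add_le _ _).trans (add_le_add_right ?_ _)
    rw [abs_mul]
    gcongr
    split_ifs <;> simp [(exp_pos _).le]
  rw [renewalKernel_eq hv, ← sq_abs]
  exact mul_le_mul_of_nonneg_right (pow_le_pow_left₀ (abs_nonneg _) hcoeff 2) (exp_pos _).le

theorem isExpBoundedKernel_renewalKernel (hb : b < 0) :
    IsExpBoundedKernel (2 * b) ((|c| + |d| * exp (-(b * α))) ^ 2) (renewalKernel b c d α) :=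
  ⟨by linarith, measurable_renewalKernel b c d α, fun _ _ => sq_nonneg _,
    fun _ hv => renewalKernel_le hv⟩

theorem integral_renewalKernel (hα : 0 < α) (hb : b < 0) :
    ∫ v in Ioi 0, renewalKernel b c d α v
      = (c ^ 2 + d ^ 2 + 2 * c * d * exp (b * α)) / (-2 * b) := by
  have h2b : 2 * b < 0 := by linarith
  set B := c + d * exp (-(b * α)) with hB
  have hk : ∀ v ∈ Ioi (0 : ℝ), renewalKernel b c d α v
      = c ^ 2 * exp (2 * b * v)
        + (Ici α).indicator (fun v => (B ^ 2 - c ^ 2) * exp (2 * b * v)) v := by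
    intro v hv
    rw [renewalKernel_eq hv.le]
    simp only [indicator_apply, mem_Ici]
    split_ifs <;> ring
  rw [setIntegral_congr_fun measurableSet_Ioi hk, integral_add
    ((integrableOn_exp_mul_Ioi h2b 0).const_mul _)
    (((integrableOn_exp_mul_Ioi h2b 0).const_mul _).indicator measurableSet_Ici),
    MeasureTheory.integral_const_mul, setIntegral_indicator measurableSet_Ici,
    inter_eq_right.2 (Ici_subset_Ioi.2 hα), integral_Ici_eq_integral_Ioi,
    MeasureTheory.integral_const_mul, integral_exp_mul_Ioi h2b, integral_exp_mul_Ioi h2b, mul_zero,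
    exp_zero, ← exp_mul_sq, hB, exp_neg]
  field_simp
  ring

theorem add_mul_exp_neg_ne_zero (hα : 0 < α)
    (hnondeg : ¬ (c * d < 0 ∧ b = 1 / α * log (-d / c))) (hcd : c ≠ 0 ∨ d ≠ 0) :
    c + d * exp (-(b * α)) ≠ 0 := by
  intro h
  have hd : d = -c * exp (b * α) := by
    rw [exp_neg] at h
    field_simp at h
    linarith
  have hc : c ≠ 0 := fun hc => hcd.elim (· hc) fun hd0 => hd0 (by simp [hd, hc])
  refine hnondeg ⟨?_, ?_⟩
  · rw [hd]
    nlinarith [exp_pos (b * α), sq_pos_of_ne_zero hc]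
  · rw [hd, neg_mul, neg_neg, mul_div_cancel_left₀ _ hc, log_exp]
    field_simp

theorem isRenewalSolution_of_eq {x₀ : ℝ} {x f g y : ℝ → ℝ} (hx : ∀ t, x t = x₀ * exp (b * t))
    (hf : ∀ t ≥ 0, f t = (c * x t + d * x (t - α)) ^ 2)
    (hg : ∀ t ≥ 0, g t = renewalKernel b c d α t) (hy : Measurable y) (hy0 : ∀ t ≥ 0, 0 ≤ y t)
    (hyK : ∀ T, ∃ K, ∀ t ∈ Icc 0 T, y t ≤ K)
    (hren : ∀ t ≥ 0, y t = f t + ∫ s in (0 : ℝ)..t, g (t - s) * y s) :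
    IsRenewalSolution (2 * b) (x₀ ^ 2 * (c + d * exp (-(b * α))) ^ 2)
      (renewalKernel b c d α) y := by
  refine ⟨hy, fun T => ?_, fun t ht => ?_⟩
  · obtain ⟨K, hK⟩ := hyK T
    exact hy.integrableOn_Icc_of_abs_le fun t ht => (abs_of_nonneg (hy0 t ht.1)).trans_le (hK t ht)
  · rw [hren t ht, hf t ht, hx, hx, exp_mul_sub_eq, ← exp_mul_sq]
    congr 1
    · ring
    · exact integral_congr fun s hs => by rw [hg (t - s) (sub_nonneg.2 (uIcc_of_le ht ▸ hs).2)]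

end DelayKernel

/-- Deterministic core of the mean-square stability characterization (3.7)
in the Example. -/
theorem stmt13 (α b c d : ℝ) (hα : 0 < α) (hb : b < 0)
    (hnondeg : ¬ (c * d < 0 ∧ b = (1 / α) * Real.log (-d / c)))
    (r : ℝ → ℝ) (hr : ∀ t : ℝ, r t = if 0 ≤ t then Real.exp (b * t) else 0)
    (x₀ : ℝ) (hx₀ : x₀ ≠ 0)
    (x : ℝ → ℝ) (hx : ∀ t : ℝ, x t = x₀ * Real.exp (b * t))
    (f g : ℝ → ℝ)
    (hf : ∀ t ≥ (0:ℝ), f t = (c * x t + d * x (t - α)) ^ 2)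
    (hg : ∀ t ≥ (0:ℝ), g t = (c * r t + d * r (t - α)) ^ 2)
    (y : ℝ → ℝ) (hymeas : Measurable y) (hynn : ∀ t ≥ (0:ℝ), 0 ≤ y t)
    (hybdd : ∀ T : ℝ, ∃ K : ℝ, ∀ t ∈ Set.Icc (0:ℝ) T, y t ≤ K)
    (hren : ∀ t ≥ (0:ℝ), y t = f t + ∫ s in (0:ℝ)..t, g (t - s) * y s)
    (M : ℝ → ℝ)
    (hM : ∀ t ≥ (0:ℝ), M t = (x t) ^ 2 + ∫ s in (0:ℝ)..t, (r (t - s)) ^ 2 * y s) :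
    Tendsto M atTop (nhds 0)
      ↔ c ^ 2 + d ^ 2 + 2 * c * d * Real.exp (b * α) < -2 * b := by
  obtain rfl : r = fundamentalSolution b := funext hr
  have h2b : 2 * b < 0 := by linarith
  have hsol := isRenewalSolution_of_eq hx hf hg hymeas hynn hybdd hren
  have hMφ : ∀ t ≥ 0, M t = x₀ ^ 2 * exp (2 * b * t)
      + ∫ s in (0 : ℝ)..t, exp (2 * b * (t - s)) * y s := by
    intro t ht
    rw [hM t ht, hx, mul_pow, exp_mul_sq]
    congr 1
    exact integral_congr fun s hs => by
      rw [fundamentalSolution_sq (sub_nonneg.2 (uIcc_of_le ht ▸ hs).2)]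
  have hinit : Tendsto (fun t => x₀ ^ 2 * exp (2 * b * t)) atTop (𝓝 0) := by
    simpa using (tendsto_exp_mul_atTop_zero h2b).const_mul (x₀ ^ 2)
  have hk := isExpBoundedKernel_renewalKernel (c := c) (d := d) (α := α) hb
  rw [tendsto_congr' ((eventually_ge_atTop 0).mono hMφ), ← div_lt_one (by linarith : 0 < -2 * b),
    ← integral_renewalKernel hα hb]
  refine ⟨fun hφ => ?_, fun hL => ?_⟩
  · by_contra hL
    have hcd : c ≠ 0 ∨ d ≠ 0 := by
      contrapose! hL
      simp [integral_renewalKernel hα hb, hL.1, hL.2]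
    have hA : 0 < x₀ ^ 2 * (c + d * exp (-(b * α))) ^ 2 := by
      have := add_mul_exp_neg_ne_zero hα hnondeg hcd
      positivity
    exact hsol.not_tendsto hk hynn hA (not_lt.1 hL) (by simpa using hφ.sub hinit)
  · simpa using hinit.add (tendsto_integral_exp_mul_sub_mul h2b
      (hsol.integrableOn_Ioi hk hynn (by positivity) hL))
end

section
/- (Deterministic solution of a non-trivial stochastic delay equation, final claim of the Example.) Let α > 2/(e²−1), set γ = −1/α, c = −e, d = 1 and b = γ, and define x(t) = e^{γt} for t ∈ ℝ and r : ℝ → ℝ by r(t) = e^{bt} for t ≥ 0 and r(t) = 0 for t < 0. Then: (i) c·x(t) + d·x(t−α) = 0 for all t ≥ 0; (ii) ∫₀^∞ (c·r(s) + d·r(s−α))² ds = α·(e²−1)/2 > 1; and (iii) x(t) → 0 as t → ∞. -/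
open MeasureTheory Filter Set

/-- Deterministic solution of a non-trivial stochastic delay equation:
final claim of the Example. -/
theorem stmt14 (α : ℝ) (hα : 2 / (Real.exp 1 ^ 2 - 1) < α)
    (γ c d b : ℝ) (hγ : γ = -1 / α) (hc : c = -Real.exp 1) (hd : d = 1) (hb : b = γ)
    (x : ℝ → ℝ) (hx : ∀ t : ℝ, x t = Real.exp (γ * t))
    (r : ℝ → ℝ) (hr : ∀ t : ℝ, r t = if 0 ≤ t then Real.exp (b * t) else 0) :
    (∀ t ≥ (0:ℝ), c * x t + d * x (t - α) = 0) ∧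
    ((∫ s in Set.Ioi (0:ℝ), (c * r s + d * r (s - α)) ^ 2)
        = α * (Real.exp 1 ^ 2 - 1) / 2
      ∧ 1 < α * (Real.exp 1 ^ 2 - 1) / 2) ∧
    Tendsto x atTop (nhds 0) := by
  have he1 : (1:ℝ) < Real.exp 1 := by
    have := Real.exp_one_gt_d9; linarith
  have he2 : (0:ℝ) < Real.exp 1 ^ 2 - 1 := by nlinarith
  have hα0 : 0 < α := lt_trans (by positivity) hα
  have hαne : α ≠ 0 := ne_of_gt hα0
  have hkey : γ * α = -1 := by rw [hγ]; field_simp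
  have hγneg : γ < 0 := by
    rw [hγ]; exact div_neg_of_neg_of_pos (by norm_num) hα0
  refine ⟨?_, ⟨?_, ?_⟩, ?_⟩
  · intro t ht
    rw [hx, hx, hc, hd]
    have h1 : γ * (t - α) = γ * t + 1 := by rw [mul_sub, hkey]; ring
    rw [h1, Real.exp_add]; ring
  · -- the integral
    have hsplit : Ioi (0:ℝ) = Ioo 0 α ∪ Ici α := (Ioo_union_Ici_eq_Ioi hα0).symm
    have hzero : ∀ s ∈ Ici α, (c * r s + d * r (s - α)) ^ 2 = 0 := by
      intro s hs
      have hs0 : (0:ℝ) ≤ s := le_trans hα0.le hs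
      have hsα : (0:ℝ) ≤ s - α := sub_nonneg.2 hs
      rw [hr, hr, if_pos hs0, if_pos hsα, hc, hd, hb]
      have h1 : γ * (s - α) = γ * s + 1 := by rw [mul_sub, hkey]; ring
      rw [h1, Real.exp_add]; ring
    have hoo : ∀ s ∈ Ioo (0:ℝ) α,
        (c * r s + d * r (s - α)) ^ 2 = Real.exp (2 + 2 * γ * s) := by
      intro s hs
      have hs0 : (0:ℝ) ≤ s := hs.1.le
      have hsα : ¬ (0:ℝ) ≤ s - α := by simp [sub_nonneg]; exact hs.2
      rw [hr, hr, if_pos hs0, if_neg hsα, hc, hd, hb]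
      rw [show (2:ℝ) + 2 * γ * s = 1 + (1 + (γ * s + γ * s)) by ring,
        Real.exp_add, Real.exp_add, Real.exp_add]
      ring
    calc (∫ s in Set.Ioi (0:ℝ), (c * r s + d * r (s - α)) ^ 2)
        = (∫ s in Ioo (0:ℝ) α, (c * r s + d * r (s - α)) ^ 2)
          + (∫ s in Ici α, (c * r s + d * r (s - α)) ^ 2) := by
          rw [hsplit]
          apply setIntegral_union
          · rw [Set.disjoint_left]; intro a ha hb; exact (not_le.2 ha.2) hb
          · exact measurableSet_Ici
          · apply (integrableOn_congr_fun hoo measurableSet_Ioo).2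
            have hcont : Continuous fun s : ℝ => Real.exp (2 + 2 * γ * s) := by continuity
            exact (hcont.integrableOn_Icc (a := 0) (b := α)).mono_set Ioo_subset_Icc_self
          · exact (integrableOn_congr_fun hzero measurableSet_Ici).2 (integrableOn_zero)
      _ = (∫ s in Ioo (0:ℝ) α, Real.exp (2 + 2 * γ * s)) + 0 := by
          rw [setIntegral_congr_fun measurableSet_Ioo hoo,
            setIntegral_congr_fun measurableSet_Ici hzero, integral_zero]
      _ = ∫ s in (0:ℝ)..α, Real.exp (2 + 2 * γ * s) := by
          rw [intervalIntegral.integral_of_le hα0.le, integral_Ioc_eq_integral_Ioo, add_zero]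
      _ = α * (Real.exp 1 ^ 2 - 1) / 2 := by
          have h2γ : 2 * γ ≠ 0 := by
            intro h; exact (ne_of_lt hγneg) (by linarith [mul_eq_zero.1 h])
          have : ∀ s : ℝ, HasDerivAt (fun u => Real.exp (2 + 2 * γ * u) / (2 * γ))
              (Real.exp (2 + 2 * γ * s)) s := by
            intro s
            have h1 : HasDerivAt (fun u : ℝ => 2 + 2 * γ * u) (2 * γ) s := by
              simpa using ((hasDerivAt_id s).const_mul (2 * γ)).const_add 2
            have h2 := (Real.hasDerivAt_exp (2 + 2 * γ * s)).comp s h1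
            have h3 := h2.div_const (2 * γ)
            simpa [mul_div_assoc, mul_div_cancel_right₀ _ h2γ] using h3
          rw [intervalIntegral.integral_eq_sub_of_hasDerivAt (fun s _ => this s)
            ((by continuity : Continuous fun s : ℝ => Real.exp (2 + 2 * γ * s)).intervalIntegrable 0 α)]
          have hγα : 2 + 2 * γ * α = 0 := by rw [mul_assoc, hkey]; ring
          rw [hγα]
          have he2' : Real.exp 1 ^ 2 = Real.exp 2 := by
            rw [← Real.exp_nat_mul]; norm_num
          rw [he2']
          simp only [mul_zero, add_zero, Real.exp_zero]
          rw [hγ]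
          field_simp
          ring
  · rw [lt_div_iff₀ (by norm_num : (0:ℝ) < 2)]
    have := (div_lt_iff₀ he2).1 hα
    linarith
  · have h0 : Tendsto (fun t : ℝ => (-γ) * t) atTop atTop :=
      tendsto_id.const_mul_atTop (by linarith)
    have h1 : Tendsto (fun t : ℝ => γ * t) atTop atBot := by
      simpa only [Function.comp_def, neg_mul, neg_neg] using tendsto_neg_atTop_atBot.comp h0
    have h2 := Real.tendsto_exp_atBot.comp h1
    exact h2.congr fun t => (hx t).symm
end
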